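/- arXiv:2412.07952 — 3 statements merged into one kernel-verified Lean document; each statement's English description precedes it below -/
import Mathlib

section
/- The expected area of a random triangle with i.i.d. uniform vertices in the unit square equals 11/144. -/
/-!
The area of the triangle is `|det (x₁ - x₀, x₂ - x₀)| / 2`. By Fubini we first integrate over the
three abscissae with the ordinates `u, v, w` fixed; the determinant is linear in the abscissae,
which gives the symmetric function `meanAbsDet u v w`, equal for `p ≤ q ≤ r` to
`(((q - p)² + (r - q)²) / 3 + (q - p) (r - q) / 2) / (r - p)`. By symmetry the integral over the
cube of ordinates is six times the integral over the simplex `p ≤ q ≤ r`. Integrating the middle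
ordinate `q` first keeps the denominator constant and gives `11 (r - p)² / 36`, so the mean of
`|det|` is `6 · 11 / 432 = 11 / 72` and the mean area is `11 / 144`.
-/

open MeasureTheory Set Function Pointwise

local notation "ℝ²" => EuclideanSpace ℝ (Fin 2)

@[fun_prop]
theorem continuous_parametric_intervalIntegral_of_continuous_limits {X : Type*}
    [TopologicalSpace X] {f : X → ℝ → ℝ} (hf : Continuous fun p : X × ℝ => f p.1 p.2)
    {a b : X → ℝ} (ha : Continuous a) (hb : Continuous b) :
    Continuous fun x => ∫ t in a x..b x, f x t := by
  have h x : ∫ t in a x..b x, f x t = (∫ t in 0..b x, f x t) - ∫ t in 0..a x, f x t :=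
    (intervalIntegral.integral_interval_sub_left ((hf.uncurry_left x).intervalIntegrable _ _)
      ((hf.uncurry_left x).intervalIntegrable _ _)).symm
  simp_rw [h]
  fun_prop

theorem intervalIntegral_intervalIntegral_swap_of_continuous {f : ℝ → ℝ → ℝ}
    (hf : Continuous fun p : ℝ × ℝ => f p.1 p.2) (a b c d : ℝ) :
    ∫ x in a..b, ∫ y in c..d, f x y = ∫ y in c..d, ∫ x in a..b, f x y :=
  intervalIntegral_intervalIntegral_swap
    ((hf.continuousOn.integrableOn_compact (isCompact_uIcc.prod isCompact_uIcc)).mono_set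
      (prod_mono uIoc_subset_uIcc uIoc_subset_uIcc))

theorem intervalIntegral_swap_triangle {f : ℝ → ℝ → ℝ}
    (hf : Continuous fun p : ℝ × ℝ => f p.1 p.2) {a b : ℝ} (hab : a ≤ b) :
    ∫ x in a..b, ∫ y in a..x, f x y = ∫ y in a..b, ∫ x in y..b, f x y := by
  set S := {q : ℝ × ℝ | q.2 < q.1}
  have hS : MeasurableSet S := measurableSet_lt measurable_snd measurable_fst
  have hint : Integrable f.uncurry
      ((volume.restrict (Ioc a b)).prod (volume.restrict (Ioc a b))) := by
    rw [Measure.prod_restrict, ← Measure.volume_eq_prod]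
    exact (hf.continuousOn.integrableOn_compact (isCompact_Icc.prod isCompact_Icc)).mono_set
      (prod_mono Ioc_subset_Icc_self Ioc_subset_Icc_self)
  simp only [intervalIntegral.integral_of_le hab]
  calc ∫ x in Ioc a b, ∫ y in a..x, f x y
      = ∫ x in Ioc a b, ∫ y in Ioc a b, S.indicator f.uncurry (x, y) := by
        refine setIntegral_congr_fun measurableSet_Ioc fun x hx => ?_
        have hslice : Ioc a b ∩ Iio x = Ioo a x := by
          ext y; simp only [mem_inter_iff, mem_Ioc, mem_Iio, mem_Ioo]; grind [hx.2]
        rw [show (fun y => S.indicator f.uncurry (x, y)) = (Iio x).indicator (f x) from rfl,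
          setIntegral_indicator measurableSet_Iio, hslice, ← integral_Ioc_eq_integral_Ioo,
          intervalIntegral.integral_of_le hx.1.le]
    _ = ∫ y in Ioc a b, ∫ x in Ioc a b, S.indicator f.uncurry (x, y) :=
        integral_integral_swap (hint.indicator hS)
    _ = ∫ y in Ioc a b, ∫ x in y..b, f x y := by
        refine setIntegral_congr_fun measurableSet_Ioc fun y hy => ?_
        rw [show (fun x => S.indicator f.uncurry (x, y)) = (Ioi y).indicator (f · y) from rfl,
          setIntegral_indicator measurableSet_Ioi, Ioc_inter_Ioi, sup_eq_right.2 hy.1.le,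
          intervalIntegral.integral_of_le hy.2]

theorem intervalIntegral_square_eq_triangle {f : ℝ → ℝ → ℝ}
    (hf : Continuous fun p : ℝ × ℝ => f p.1 p.2) {a b : ℝ} (hab : a ≤ b) :
    ∫ x in a..b, ∫ y in a..b, f x y = ∫ x in a..b, ∫ y in a..x, (f x y + f y x) := by
  have hsplit x : ∫ y in a..b, f x y = (∫ y in a..x, f x y) + ∫ y in x..b, f x y :=
    (intervalIntegral.integral_add_adjacent_intervals ((hf.uncurry_left x).intervalIntegrable _ _)
      ((hf.uncurry_left x).intervalIntegrable _ _)).symm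
  have hflip : ∫ x in a..b, ∫ y in x..b, f x y = ∫ x in a..b, ∫ y in a..x, f y x :=
    (intervalIntegral_swap_triangle (f := fun x y => f y x) (by fun_prop) hab).symm
  simp (disch := apply Continuous.intervalIntegrable; fun_prop) only
    [hsplit, intervalIntegral.integral_add, hflip]

theorem intervalIntegral_simplex_swap_middle {G : ℝ → ℝ → ℝ → ℝ}
    (hG : Continuous fun p : ℝ × ℝ × ℝ => G p.1 p.2.1 p.2.2) {a b : ℝ} (hab : a ≤ b) :
    ∫ u in a..b, ∫ v in a..u, ∫ w in u..b, G u v w =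
      ∫ w in a..b, ∫ v in a..w, ∫ u in v..w, G u v w :=
  calc ∫ u in a..b, ∫ v in a..u, ∫ w in u..b, G u v w
      = ∫ u in a..b, ∫ w in u..b, ∫ v in a..u, G u v w :=
        intervalIntegral.integral_congr fun u _ =>
          intervalIntegral_intervalIntegral_swap_of_continuous (f := fun v w => G u v w)
            (by fun_prop) _ _ _ _
    _ = ∫ w in a..b, ∫ u in a..w, ∫ v in a..u, G u v w :=
        (intervalIntegral_swap_triangle (f := fun w u => ∫ v in a..u, G u v w)
          (by fun_prop) hab).symm
    _ = ∫ w in a..b, ∫ v in a..w, ∫ u in v..w, G u v w :=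
        intervalIntegral.integral_congr fun w hw =>
          intervalIntegral_swap_triangle (f := fun u v => G u v w) (by fun_prop)
            (uIcc_of_le hab ▸ hw).1

theorem intervalIntegral_cube_eq_six_mul_simplex {G : ℝ → ℝ → ℝ → ℝ}
    (hG : Continuous fun p : ℝ × ℝ × ℝ => G p.1 p.2.1 p.2.2)
    (h₁₂ : ∀ x y z, G x y z = G y x z) (h₂₃ : ∀ x y z, G x y z = G x z y) {a b : ℝ}
    (hab : a ≤ b) :
    ∫ u in a..b, ∫ v in a..b, ∫ w in a..b, G u v w =
      6 * ∫ r in a..b, ∫ p in a..r, ∫ q in p..r, G p q r := by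
  have hsplit u v : ∫ w in a..b, G u v w =
      (∫ w in a..v, G u v w) + (∫ w in v..u, G u v w) + ∫ w in u..b, G u v w := by
    have hi (c d : ℝ) : IntervalIntegrable (G u v) volume c d :=
      Continuous.intervalIntegrable (by fun_prop) c d
    rw [intervalIntegral.integral_add_adjacent_intervals (hi _ _) (hi _ _),
      intervalIntegral.integral_add_adjacent_intervals (hi _ _) (hi _ _)]
  -- For `v ≤ u`, the three pieces of `hsplit` are the simplices `w ≤ v ≤ u`, `v ≤ w ≤ u` and
  -- `v ≤ u ≤ w`; each becomes the standard one after moving the middle variable innermost.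
  have hlow : ∫ u in a..b, ∫ v in a..u, ∫ w in a..v, G u v w =
      ∫ r in a..b, ∫ p in a..r, ∫ q in p..r, G p q r := by
    refine intervalIntegral.integral_congr fun u hu => ?_
    rw [intervalIntegral_swap_triangle (f := fun v w => G u v w) (by fun_prop)
      (uIcc_of_le hab ▸ hu).1]
    refine intervalIntegral.integral_congr fun w _ => intervalIntegral.integral_congr fun v _ => ?_
    rw [h₁₂, h₂₃, h₁₂]
  have hmid : ∫ u in a..b, ∫ v in a..u, ∫ w in v..u, G u v w =
      ∫ r in a..b, ∫ p in a..r, ∫ q in p..r, G p q r := by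
    refine intervalIntegral.integral_congr fun u _ => intervalIntegral.integral_congr fun v _ =>
      intervalIntegral.integral_congr fun w _ => ?_
    rw [h₁₂, h₂₃]
  have hhigh : ∫ u in a..b, ∫ v in a..u, ∫ w in u..b, G u v w =
      ∫ r in a..b, ∫ p in a..r, ∫ q in p..r, G p q r := by
    rw [intervalIntegral_simplex_swap_middle hG hab]
    refine intervalIntegral.integral_congr fun w _ => intervalIntegral.integral_congr fun v _ =>
      intervalIntegral.integral_congr fun u _ => ?_
    rw [h₁₂]
  have hsym u v : ∫ w in a..b, G v u w = ∫ w in a..b, G u v w := by simp only [h₁₂ v u]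
  rw [intervalIntegral_square_eq_triangle (f := fun u v => ∫ w in a..b, G u v w) (by fun_prop)
    hab]
  simp only [hsym, ← two_mul, intervalIntegral.integral_const_mul, hsplit]
  simp (disch := apply Continuous.intervalIntegrable; fun_prop) only
    [intervalIntegral.integral_add, hlow, hmid, hhigh]
  ring

theorem integral_quadratic (c₂ c₁ c₀ a b : ℝ) :
    ∫ x in a..b, (c₂ * x ^ 2 + c₁ * x + c₀) =
      c₂ * (b ^ 3 - a ^ 3) / 3 + c₁ * (b ^ 2 - a ^ 2) / 2 + c₀ * (b - a) := by
  have hi {f : ℝ → ℝ} (hf : Continuous f) : IntervalIntegrable f volume a b :=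
    hf.intervalIntegrable a b
  rw [intervalIntegral.integral_add (hi (by fun_prop)) (hi (by fun_prop)),
    intervalIntegral.integral_add (hi (by fun_prop)) (hi (by fun_prop)),
    intervalIntegral.integral_const_mul, intervalIntegral.integral_const_mul, integral_pow,
    integral_id, intervalIntegral.integral_const, smul_eq_mul]
  ring

theorem integral_abs (a b : ℝ) : ∫ x in a..b, |x| = (b * |b| - a * |a|) / 2 := by
  have h (b : ℝ) : ∫ x in 0..b, |x| = b * |b| / 2 := by
    rcases le_total 0 b with hb | hb
    · rw [intervalIntegral.integral_congr (g := fun x => x) fun x hx =>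
        abs_of_nonneg (uIcc_of_le hb ▸ hx).1, integral_id, abs_of_nonneg hb]
      ring
    · rw [intervalIntegral.integral_congr (g := fun x => -x) fun x hx =>
        abs_of_nonpos (uIcc_of_ge hb ▸ hx).2, intervalIntegral.integral_neg, integral_id,
        abs_of_nonpos hb]
      ring
  rw [← intervalIntegral.integral_interval_sub_left (continuous_abs.intervalIntegrable 0 b)
    (continuous_abs.intervalIntegrable 0 a), h, h]
  ring

theorem integral_abs_mul_sub {s t : ℝ} (hs : 0 < s) (ht : 0 ≤ t) (hts : t ≤ s) :
    ∫ y in (0 : ℝ)..1, |s * y - t| = (t ^ 2 + (s - t) ^ 2) / (2 * s) := by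
  rw [intervalIntegral.integral_comp_mul_sub (fun z => |z|) hs.ne', integral_abs, mul_zero,
    mul_one, zero_sub, abs_neg, abs_of_nonneg ht, abs_of_nonneg (sub_nonneg.2 hts), smul_eq_mul]
  field_simp
  ring

theorem integral_integral_sq_add_sq (α β : ℝ) :
    ∫ a in (0 : ℝ)..1, ∫ b in (0 : ℝ)..1,
        ((α * a + β * b) ^ 2 + (α + β - (α * a + β * b)) ^ 2) =
      2 * (α ^ 2 + β ^ 2) / 3 + α * β := by
  have hinner (a : ℝ) :
      ∫ b in (0 : ℝ)..1, ((α * a + β * b) ^ 2 + (α + β - (α * a + β * b)) ^ 2) =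
        2 * α ^ 2 * a ^ 2 + (-2 * α ^ 2) * a + (α ^ 2 + α * β + 2 * β ^ 2 / 3) := by
    rw [intervalIntegral.integral_congr (g := fun b => 2 * β ^ 2 * b ^ 2 +
      2 * β * (2 * α * a - α - β) * b + ((α * a) ^ 2 + (α + β - α * a) ^ 2)) fun b _ => by ring,
      integral_quadratic]
    ring
  simp only [hinner, integral_quadratic]
  ring

/-- Twice the expected area of the triangle with vertices `(a, u), (b, v), (c, w)` when the
abscissae `a, b, c` are independent and uniform on `[0, 1]`. -/
noncomputable def meanAbsDet (u v w : ℝ) : ℝ :=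
  ∫ a in (0 : ℝ)..1, ∫ b in (0 : ℝ)..1, ∫ c in (0 : ℝ)..1,
    |a * (v - w) + b * (w - u) + c * (u - v)|

theorem continuous_meanAbsDet :
    Continuous fun p : ℝ × ℝ × ℝ => meanAbsDet p.1 p.2.1 p.2.2 := by
  unfold meanAbsDet
  fun_prop

theorem meanAbsDet_swap_left (u v w : ℝ) : meanAbsDet u v w = meanAbsDet v u w := by
  unfold meanAbsDet
  rw [intervalIntegral_intervalIntegral_swap_of_continuous (by fun_prop)]
  refine intervalIntegral.integral_congr fun b _ => intervalIntegral.integral_congr fun a _ =>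
    intervalIntegral.integral_congr fun c _ => ?_
  rw [← abs_neg]
  ring_nf

theorem meanAbsDet_swap_right (u v w : ℝ) : meanAbsDet u v w = meanAbsDet u w v := by
  unfold meanAbsDet
  refine intervalIntegral.integral_congr fun a _ => ?_
  rw [intervalIntegral_intervalIntegral_swap_of_continuous (by fun_prop)]
  refine intervalIntegral.integral_congr fun c _ => intervalIntegral.integral_congr fun b _ => ?_
  rw [← abs_neg]
  ring_nf

theorem meanAbsDet_rotate (u v w : ℝ) : meanAbsDet u v w = meanAbsDet v w u := by
  rw [meanAbsDet_swap_left, meanAbsDet_swap_right]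

theorem meanAbsDet_of_le {p q r : ℝ} (hpq : p ≤ q) (hqr : q ≤ r) :
    meanAbsDet p q r =
      (((q - p) ^ 2 + (r - q) ^ 2) / 3 + (q - p) * (r - q) / 2) / (r - p) := by
  rcases (hpq.trans hqr).eq_or_lt with hpr | hpr
  · obtain rfl : p = q := le_antisymm hpq (hpr ▸ hqr)
    obtain rfl : p = r := hpr
    simp [meanAbsDet]
  -- After rotating, the coefficient `r - p` of the innermost variable dominates the other two.
  have hinner (a b : ℝ) (ha : a ∈ uIcc 0 1) (hb : b ∈ uIcc 0 1) :
      ∫ c in (0 : ℝ)..1, |a * (p - q) + b * (q - r) + c * (r - p)| =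
        (((q - p) * a + (r - q) * b) ^ 2 +
            ((q - p) + (r - q) - ((q - p) * a + (r - q) * b)) ^ 2) /
          (2 * ((q - p) + (r - q))) := by
    rw [uIcc_of_le zero_le_one] at ha hb
    have hpos : 0 < (q - p) + (r - q) := by linarith
    have h0 : 0 ≤ (q - p) * a + (r - q) * b :=
      add_nonneg (mul_nonneg (sub_nonneg.2 hpq) ha.1) (mul_nonneg (sub_nonneg.2 hqr) hb.1)
    have h1 : (q - p) * a + (r - q) * b ≤ (q - p) + (r - q) :=
      add_le_add (mul_le_of_le_one_right (sub_nonneg.2 hpq) ha.2)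
        (mul_le_of_le_one_right (sub_nonneg.2 hqr) hb.2)
    rw [← integral_abs_mul_sub hpos h0 h1]
    exact intervalIntegral.integral_congr fun c _ => by ring_nf
  rw [← meanAbsDet_rotate, meanAbsDet,
    intervalIntegral.integral_congr fun a ha => intervalIntegral.integral_congr fun b hb =>
      hinner a b ha hb]
  simp only [intervalIntegral.integral_div, integral_integral_sq_add_sq]
  rw [show q - p + (r - q) = r - p by ring]
  field_simp [(sub_pos.2 hpr).ne']

theorem integral_meanAbsDet_middle {p r : ℝ} (hpr : p ≤ r) :
    ∫ q in p..r, meanAbsDet p q r = 11 * (r - p) ^ 2 / 36 := by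
  rcases hpr.eq_or_lt with rfl | hpr
  · simp
  rw [intervalIntegral.integral_congr fun q hq => meanAbsDet_of_le
      (uIcc_of_le hpr.le ▸ hq).1 (uIcc_of_le hpr.le ▸ hq).2,
    intervalIntegral.integral_div,
    intervalIntegral.integral_congr (g := fun q => 1 / 6 * q ^ 2 + -(p + r) / 6 * q +
      ((p ^ 2 + r ^ 2) / 3 - p * r / 2)) fun q _ => by ring,
    integral_quadratic]
  field_simp [(sub_pos.2 hpr).ne']
  ring

theorem integral_cube_meanAbsDet :
    ∫ u in (0 : ℝ)..1, ∫ v in (0 : ℝ)..1, ∫ w in (0 : ℝ)..1, meanAbsDet u v w = 11 / 72 := by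
  have hinner (r : ℝ) : ∫ p in (0 : ℝ)..r, 11 * (r - p) ^ 2 / 36 = 11 / 108 * r ^ 3 := by
    rw [intervalIntegral.integral_congr (g := fun p => 11 / 36 * p ^ 2 + -(11 * r / 18) * p +
      11 * r ^ 2 / 36) fun p _ => by ring, integral_quadratic]
    ring
  rw [intervalIntegral_cube_eq_six_mul_simplex continuous_meanAbsDet meanAbsDet_swap_left
      meanAbsDet_swap_right zero_le_one,
    intervalIntegral.integral_congr fun r hr => intervalIntegral.integral_congr fun p hp =>
      integral_meanAbsDet_middle (by
        rw [uIcc_of_le zero_le_one] at hr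
        rw [uIcc_of_le hr.1] at hp
        exact hp.2)]
  simp only [hinner, intervalIntegral.integral_const_mul, integral_pow]
  norm_num

theorem volume_stdTriangle_prod :
    volume {p : ℝ × ℝ | 0 ≤ p.1 ∧ 0 ≤ p.2 ∧ p.1 + p.2 ≤ 1} = ENNReal.ofReal (1 / 2) := by
  set T := {p : ℝ × ℝ | 0 ≤ p.1 ∧ 0 ≤ p.2 ∧ p.1 + p.2 ≤ 1}
  have hT : MeasurableSet T := by measurability
  have hslice (x : ℝ) :
      volume (Prod.mk x ⁻¹' T) = (Icc 0 1).indicator (fun x => ENNReal.ofReal (1 - x)) x := by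
    by_cases hx : 0 ≤ x
    · have : Prod.mk x ⁻¹' T = Icc 0 (1 - x) := by
        ext y; simp only [T, mem_preimage, mem_ofPred_eq, mem_Icc]; grind
      rw [this, Real.volume_Icc, sub_zero]
      by_cases hx1 : x ≤ 1
      · rw [indicator_of_mem (show x ∈ Icc 0 1 from ⟨hx, hx1⟩)]
      · rw [indicator_of_notMem (fun h => hx1 h.2), ENNReal.ofReal_eq_zero.2 (by linarith)]
    · have : Prod.mk x ⁻¹' T = ∅ := by
        ext y; simp only [T, mem_preimage, mem_ofPred_eq, mem_empty_iff_false, iff_false]; grind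
      rw [this, measure_empty, indicator_of_notMem (fun h => hx h.1)]
  rw [Measure.volume_eq_prod, Measure.prod_apply hT, lintegral_congr hslice,
    lintegral_indicator measurableSet_Icc, ← ofReal_integral_eq_lintegral_ofReal
      (by fun_prop : Continuous fun x : ℝ => 1 - x).integrableOn_Icc
      ((ae_restrict_iff' measurableSet_Icc).2 (.of_forall fun x hx => sub_nonneg.2 hx.2)),
    integral_Icc_eq_integral_Ioc, ← intervalIntegral.integral_of_le zero_le_one,
    intervalIntegral.integral_sub intervalIntegrable_const intervalIntegral.intervalIntegrable_id,
    integral_id]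
  norm_num

def EuclideanSpace.measurableEquivProd : ℝ² ≃ᵐ ℝ × ℝ :=
  (MeasurableEquiv.toLp 2 (Fin 2 → ℝ)).symm.trans MeasurableEquiv.finTwoArrow

theorem EuclideanSpace.measurePreserving_measurableEquivProd :
    MeasurePreserving measurableEquivProd :=
  (volume_preserving_finTwoArrow ℝ).comp
    (EuclideanSpace.volume_preserving_symm_measurableEquiv_toLp (Fin 2))

theorem volume_stdTriangle :
    volume {x : ℝ² | 0 ≤ x 0 ∧ 0 ≤ x 1 ∧ x 0 + x 1 ≤ 1} = ENNReal.ofReal (1 / 2) := by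
  rw [← volume_stdTriangle_prod,
    ← EuclideanSpace.measurePreserving_measurableEquivProd.measure_preimage (by measurability)]
  rfl

theorem convexHull_zero_single_single :
    convexHull ℝ {(0 : ℝ²), EuclideanSpace.single 0 1, EuclideanSpace.single 1 1} =
      {x : ℝ² | 0 ≤ x 0 ∧ 0 ≤ x 1 ∧ x 0 + x 1 ≤ 1} := by
  refine (convexHull_min ?_ ?_).antisymm fun x hx => ?_
  · rintro x (rfl | rfl | rfl) <;> simp
  · intro x hx y hy s t hs ht hst
    simp only [mem_ofPred_eq, PiLp.add_apply, PiLp.smul_apply, smul_eq_mul] at hx hy ⊢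
    refine ⟨by nlinarith, by nlinarith, by nlinarith⟩
  · have hcomb : ∑ i : Fin 3, ![1 - x 0 - x 1, x 0, x 1] i •
        ![(0 : ℝ²), EuclideanSpace.single 0 1, EuclideanSpace.single 1 1] i = x := by
      ext i; fin_cases i <;> simp [Fin.sum_univ_three]
    rw [← hcomb]
    refine (convex_convexHull ℝ _).sum_mem (fun i _ => ?_) ?_ fun i _ => subset_convexHull ℝ _ ?_
    · fin_cases i <;> simp <;> linarith [hx.1, hx.2.1, hx.2.2]
    · simp [Fin.sum_univ_three]; ring
    · fin_cases i <;> simp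

def pairLinearMap (u v : ℝ²) : ℝ² →ₗ[ℝ] ℝ² where
  toFun x := x 0 • u + x 1 • v
  map_add' x y := by simp only [PiLp.add_apply, add_smul]; abel
  map_smul' r x := by
    simp only [PiLp.smul_apply, smul_eq_mul, RingHom.id_apply, smul_add, mul_smul]

theorem det_pairLinearMap (u v : ℝ²) :
    LinearMap.det (pairLinearMap u v) = u 0 * v 1 - v 0 * u 1 := by
  rw [← LinearMap.det_toMatrix (EuclideanSpace.basisFun (Fin 2) ℝ).toBasis, Matrix.det_fin_two]
  simp [LinearMap.toMatrix_apply, pairLinearMap]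

theorem volume_convexHull_triangle (a b c : ℝ²) :
    (volume (convexHull ℝ {a, b, c})).toReal =
      |(b 0 - a 0) * (c 1 - a 1) - (b 1 - a 1) * (c 0 - a 0)| / 2 := by
  have htranslate : ({a, b, c} : Set ℝ²) = a +ᵥ pairLinearMap (b - a) (c - a) ''
      {0, EuclideanSpace.single 0 1, EuclideanSpace.single 1 1} := by
    simp [← image_vadd, image_insert_eq, pairLinearMap]
  rw [htranslate, convexHull_vadd, measure_vadd, ← LinearMap.image_convexHull,
    Measure.addHaar_image_linearMap, convexHull_zero_single_single, volume_stdTriangle,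
    det_pairLinearMap, ← ENNReal.ofReal_mul (abs_nonneg _), ENNReal.toReal_ofReal (by positivity)]
  simp only [PiLp.sub_apply]
  ring_nf

theorem setIntegral_unitSquare {f : ℝ² → ℝ} (hf : Continuous f) :
    ∫ x in {x : ℝ² | ∀ i, x i ∈ Icc (0 : ℝ) 1}, f x =
      ∫ t in (0 : ℝ)..1, ∫ s in (0 : ℝ)..1, f !₂[s, t] := by
  set e := EuclideanSpace.measurableEquivProd
  have hsquare : {x : ℝ² | ∀ i, x i ∈ Icc (0 : ℝ) 1} = e ⁻¹' (Icc 0 1 ×ˢ Icc 0 1) := by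
    ext x; simp [Fin.forall_fin_two, e, EuclideanSpace.measurableEquivProd]; tauto
  have hcont : Continuous fun p : ℝ × ℝ => f !₂[p.1, p.2] := by fun_prop
  calc ∫ x in {x : ℝ² | ∀ i, x i ∈ Icc (0 : ℝ) 1}, f x
      = ∫ x in e ⁻¹' (Icc 0 1 ×ˢ Icc 0 1), f (e.symm (e x)) := by
        simp only [hsquare, MeasurableEquiv.symm_apply_apply]
    _ = ∫ p in Icc (0 : ℝ) 1 ×ˢ Icc (0 : ℝ) 1, f !₂[p.1, p.2] :=
        EuclideanSpace.measurePreserving_measurableEquivProd.setIntegral_preimage_emb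
          e.measurableEmbedding (fun p => f (e.symm p)) _
    _ = ∫ s in Icc (0 : ℝ) 1, ∫ t in Icc (0 : ℝ) 1, f !₂[s, t] := by
        rw [Measure.volume_eq_prod, setIntegral_prod _
          (hcont.continuousOn.integrableOn_compact (isCompact_Icc.prod isCompact_Icc))]
    _ = ∫ t in (0 : ℝ)..1, ∫ s in (0 : ℝ)..1, f !₂[s, t] := by
        simp only [integral_Icc_eq_integral_Ioc, ← intervalIntegral.integral_of_le zero_le_one]
        exact intervalIntegral_intervalIntegral_swap_of_continuous hcont _ _ _ _

theorem integral_unitSquare_absDet :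
    ∫ x₀ in {x : ℝ² | ∀ i, x i ∈ Icc (0 : ℝ) 1}, ∫ x₁ in {x : ℝ² | ∀ i, x i ∈ Icc (0 : ℝ) 1},
      ∫ x₂ in {x : ℝ² | ∀ i, x i ∈ Icc (0 : ℝ) 1},
        |(x₁ 0 - x₀ 0) * (x₂ 1 - x₀ 1) - (x₁ 1 - x₀ 1) * (x₂ 0 - x₀ 0)| =
      ∫ t₀ in (0 : ℝ)..1, ∫ t₁ in (0 : ℝ)..1, ∫ t₂ in (0 : ℝ)..1, meanAbsDet t₀ t₁ t₂ := by
  simp (disch := fun_prop) only [setIntegral_unitSquare, Matrix.cons_val_zero,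
    Matrix.cons_val_one]
  -- move the abscissae `s₀, s₁, s₂` inside the ordinates `t₀, t₁, t₂`
  conv_lhs =>
    enter [1, t₀, 1, s₀, 1, t₁]
    rw [intervalIntegral_intervalIntegral_swap_of_continuous (by fun_prop)]
  conv_lhs =>
    enter [1, t₀]
    rw [intervalIntegral_intervalIntegral_swap_of_continuous (by fun_prop)]
    enter [1, t₁]
    rw [intervalIntegral_intervalIntegral_swap_of_continuous (by fun_prop)]
  refine intervalIntegral.integral_congr fun t₀ _ => intervalIntegral.integral_congr fun t₁ _ =>
    intervalIntegral.integral_congr fun t₂ _ => ?_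
  unfold meanAbsDet
  refine intervalIntegral.integral_congr fun s₀ _ => intervalIntegral.integral_congr fun s₁ _ =>
    intervalIntegral.integral_congr fun s₂ _ => ?_
  ring_nf

/-- The expected area of a random triangle with i.i.d. uniform vertices in the unit square
equals `11/144`. -/
theorem stmt_5 :
    (∫ x₀ in {x : EuclideanSpace ℝ (Fin 2) | ∀ i, x i ∈ Set.Icc (0:ℝ) 1},
        ∫ x₁ in {x : EuclideanSpace ℝ (Fin 2) | ∀ i, x i ∈ Set.Icc (0:ℝ) 1},
          ∫ x₂ in {x : EuclideanSpace ℝ (Fin 2) | ∀ i, x i ∈ Set.Icc (0:ℝ) 1},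
            (volume (convexHull ℝ {x₀, x₁, x₂})).toReal)
      = 11 / 144 := by
  simp only [volume_convexHull_triangle, integral_div, integral_unitSquare_absDet,
    integral_cube_meanAbsDet]
  norm_num
end

section
/- Under the rigid motion x ↦ Mx + b (M ∈ SO(d)), the hyperplane parametrized by η (via ηᵀx = 1) maps under g⁻¹ to the hyperplane parametrized by η' = Mη/(1 + bᵀMη), and the Jacobian determinant of the map η ↦ η' equals det(M)/(1 + bᵀMη)^{d+1}; consequently the measure ‖η‖^{−(1+d)} dη on ℝᵈ is invariant under this action. -/
/-!
The map `η ↦ (1 + c ⬝ᵥ η)⁻¹ • M η` is linear fractional. Its derivative is `a • M` corrected by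
a rank-one term, `a = (1 + c ⬝ᵥ η)⁻¹`, so the matrix determinant lemma gives the Jacobian
`det M · a ^ (d + 1)`. For orthogonal `M` the norm scales by `|a|`, so the density
`‖η‖ ^ (-(d + 1))` picks up exactly `|a| ^ (-(d + 1))`, which cancels the Jacobian. Linear
fractional maps compose like the matrices `[[M, 0], [cᵀ, 1]]`, so the map is a bijection between
complements of affine hyperplanes (Lebesgue-null sets) and the change of variables formula applies.
-/

open MeasureTheory Matrix Set

section AddHaar

variable {E : Type*} [NormedAddCommGroup E] [NormedSpace ℝ E] [FiniteDimensional ℝ E]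
  [MeasurableSpace E] [BorelSpace E] (μ : Measure E) [μ.IsAddHaarMeasure]

theorem addHaar_preimage_singleton_linearMap (f : E →ₗ[ℝ] ℝ) {r : ℝ} (h : ∃ x, f x ≠ r) :
    μ (f ⁻¹' {r}) = 0 := by
  have hcoe : f ⁻¹' {r} = (AffineSubspace.comap f.toAffineMap (affineSpan ℝ {r}) : Set E) := by
    simp
  rw [hcoe]
  refine Measure.addHaar_affineSubspace μ _ fun htop => ?_
  obtain ⟨x, hx⟩ := h
  have hmem : x ∈ AffineSubspace.comap f.toAffineMap (affineSpan ℝ {r}) :=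
    htop ▸ AffineSubspace.mem_top ℝ E x
  simp_all

theorem map_withDensity_eq_self_of_jacobian {T : E → E} {T' : E → E →L[ℝ] E} {s : Set E}
    {w : E → ENNReal} (hT : Measurable T) (hs : MeasurableSet s) (hs_ae : μ sᶜ = 0)
    (himage : μ (T '' s)ᶜ = 0) (hT' : ∀ x ∈ s, HasFDerivWithinAt T (T' x) s x)
    (hinj : InjOn T s) (hw : ∀ x ∈ s, ENNReal.ofReal |(T' x).det| * w (T x) = w x) :
    Measure.map T (μ.withDensity w) = μ.withDensity w := by
  ext t ht
  have hpre : MeasurableSet (T ⁻¹' t ∩ s) := (hT ht).inter hs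
  rw [Measure.map_apply hT ht, withDensity_apply _ (hT ht), withDensity_apply _ ht]
  calc ∫⁻ x in T ⁻¹' t, w x ∂μ
      = ∫⁻ x in T ⁻¹' t ∩ s, w x ∂μ :=
        setLIntegral_congr (inter_ae_eq_left_of_ae_eq_univ (ae_eq_univ.mpr hs_ae)).symm
    _ = ∫⁻ x in T ⁻¹' t ∩ s, ENNReal.ofReal |(T' x).det| * w (T x) ∂μ :=
        (setLIntegral_congr_fun hpre fun x hx => hw x hx.2).symm
    _ = ∫⁻ x in T '' (T ⁻¹' t ∩ s), w x ∂μ :=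
        (lintegral_image_eq_lintegral_abs_det_fderiv_mul μ hpre
          (fun x hx => (hT' x hx.2).mono inter_subset_right) (hinj.mono inter_subset_right) w).symm
    _ = ∫⁻ x in t, w x ∂μ := by
        rw [image_preimage_inter]
        exact setLIntegral_congr (inter_ae_eq_left_of_ae_eq_univ (ae_eq_univ.mpr himage))

end AddHaar

theorem det_one_add_vecMulVec {n R : Type*} [Fintype n] [DecidableEq n] [CommRing R]
    (u v : n → R) : (1 + vecMulVec u v).det = 1 + v ⬝ᵥ u := by
  rw [vecMulVec_eq Unit, det_one_add_replicateCol_mul_replicateRow]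

theorem abs_det_eq_one_of_transpose_mul_self {n : Type*} [Fintype n] [DecidableEq n]
    {A : Matrix n n ℝ} (hA : Aᵀ * A = 1) : |A.det| = 1 := by
  have h := congrArg det hA
  rw [det_mul, det_transpose, det_one] at h
  exact (abs_eq zero_le_one).mpr (mul_self_eq_one_iff.mp h)

theorem dotProduct_mulVec_self_of_transpose_mul_self {n : Type*} [Fintype n] [DecidableEq n]
    {A : Matrix n n ℝ} (hA : Aᵀ * A = 1) (v : n → ℝ) :
    A *ᵥ v ⬝ᵥ A *ᵥ v = v ⬝ᵥ v := by
  rw [dotProduct_mulVec, ← mulVec_transpose, mulVec_mulVec, hA, one_mulVec]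

section FracLinear

variable {ι : Type*} [Fintype ι]

/-- `fracLinear M (b ᵥ* M)` is the action `η ↦ Mη / (1 + bᵀMη)` of the motion `x ↦ Mx + b` on
hyperplane parameters; on the hyperplane `1 + c ⬝ᵥ η = 0` it takes the junk value `0`. -/
noncomputable def fracLinear (A : Matrix ι ι ℝ) (c η : ι → ℝ) : ι → ℝ :=
  (1 + c ⬝ᵥ η)⁻¹ • A *ᵥ η

theorem one_add_dotProduct_fracLinear (A : Matrix ι ι ℝ) (c c' : ι → ℝ) {η : ι → ℝ}
    (h : 1 + c ⬝ᵥ η ≠ 0) :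
    1 + c' ⬝ᵥ fracLinear A c η = (1 + c ⬝ᵥ η)⁻¹ * (1 + (c + c' ᵥ* A) ⬝ᵥ η) := by
  rw [fracLinear, dotProduct_smul, dotProduct_mulVec, add_dotProduct, smul_eq_mul]
  field_simp
  ring

theorem fracLinear_fracLinear (A B : Matrix ι ι ℝ) (c c' : ι → ℝ) {η : ι → ℝ}
    (h : 1 + c ⬝ᵥ η ≠ 0) :
    fracLinear B c' (fracLinear A c η) = fracLinear (B * A) (c + c' ᵥ* A) η := by
  rw [fracLinear, one_add_dotProduct_fracLinear A c c' h, fracLinear, fracLinear, mulVec_smul,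
    mulVec_mulVec, smul_smul, _root_.mul_inv_rev, inv_inv, mul_assoc, mul_inv_cancel₀ h, mul_one]

theorem mapsTo_fracLinear {A : Matrix ι ι ℝ} {c c' : ι → ℝ} (hc : c + c' ᵥ* A = 0) :
    MapsTo (fracLinear A c) {η | 1 + c ⬝ᵥ η ≠ 0} {η | 1 + c' ⬝ᵥ η ≠ 0} := fun η h => by
  simpa [one_add_dotProduct_fracLinear A c c' h, hc] using h

theorem measurable_fracLinear (A : Matrix ι ι ℝ) (c : ι → ℝ) : Measurable (fracLinear A c) :=
  ((continuous_const.add (continuous_const.dotProduct continuous_id)).measurable.inv).smul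
    (continuous_const.matrix_mulVec continuous_id).measurable

theorem volume_compl_setOf_one_add_dotProduct_ne_zero (c : ι → ℝ) :
    volume {η : ι → ℝ | 1 + c ⬝ᵥ η ≠ 0}ᶜ = 0 := by
  have hcompl : {η : ι → ℝ | 1 + c ⬝ᵥ η ≠ 0}ᶜ = dotProductBilin ℝ ℝ c ⁻¹' {-1} := by
    ext η
    simp [eq_neg_iff_add_eq_zero, add_comm]
  rw [hcompl]
  exact addHaar_preimage_singleton_linearMap volume _ ⟨0, by simp⟩

variable [DecidableEq ι]

@[simp]
theorem fracLinear_one_zero : fracLinear (1 : Matrix ι ι ℝ) 0 = id := by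
  ext η i
  simp [fracLinear]

theorem leftInvOn_fracLinear {A B : Matrix ι ι ℝ} (hBA : B * A = 1) {c c' : ι → ℝ}
    (hc : c + c' ᵥ* A = 0) :
    LeftInvOn (fracLinear B c') (fracLinear A c) {η | 1 + c ⬝ᵥ η ≠ 0} := fun η h => by
  rw [fracLinear_fracLinear A B c c' h, hBA, hc, fracLinear_one_zero, id]

theorem bijOn_fracLinear {A B : Matrix ι ι ℝ} (hBA : B * A = 1) (hAB : A * B = 1)
    (c : ι → ℝ) :
    BijOn (fracLinear A c) {η | 1 + c ⬝ᵥ η ≠ 0} {η | 1 + (-(c ᵥ* B)) ⬝ᵥ η ≠ 0} := by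
  have hc : c + (-(c ᵥ* B)) ᵥ* A = 0 := by
    rw [neg_vecMul, vecMul_vecMul, hBA, vecMul_one, add_neg_cancel]
  have hc' : -(c ᵥ* B) + c ᵥ* B = 0 := neg_add_cancel _
  exact InvOn.bijOn ⟨leftInvOn_fracLinear hBA hc, leftInvOn_fracLinear hAB hc'⟩
    (mapsTo_fracLinear hc) (mapsTo_fracLinear hc')

theorem sqrt_sum_sq_fracLinear {A : Matrix ι ι ℝ} (hA : Aᵀ * A = 1) (c η : ι → ℝ) :
    √(∑ i, fracLinear A c η i ^ 2) = √(∑ i, η i ^ 2) / |1 + c ⬝ᵥ η| := by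
  have hsq : ∀ v : ι → ℝ, ∑ i, v i ^ 2 = v ⬝ᵥ v := fun v => by simp [dotProduct, sq]
  rw [hsq, hsq, fracLinear, smul_dotProduct, dotProduct_smul,
    dotProduct_mulVec_self_of_transpose_mul_self hA, smul_eq_mul, smul_eq_mul, ← mul_assoc,
    ← sq, Real.sqrt_mul (sq_nonneg _), Real.sqrt_sq_eq_abs, abs_inv, inv_mul_eq_div]

theorem hasFDerivAt_fracLinear (A : Matrix ι ι ℝ) (c : ι → ℝ) {η : ι → ℝ}
    (h : 1 + c ⬝ᵥ η ≠ 0) :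
    HasFDerivAt (fracLinear A c) (LinearMap.toContinuousLinearMap (toLin'
      ((1 + c ⬝ᵥ η)⁻¹ • (A - (1 + c ⬝ᵥ η)⁻¹ • vecMulVec (A *ᵥ η) c)))) η := by
  have hden : HasFDerivAt (fun v => 1 + c ⬝ᵥ v)
      (LinearMap.toContinuousLinearMap (dotProductBilin ℝ ℝ c)) η :=
    (LinearMap.toContinuousLinearMap (dotProductBilin ℝ ℝ c)).hasFDerivAt.const_add (1 : ℝ)
  have hnum : HasFDerivAt (A *ᵥ ·) (LinearMap.toContinuousLinearMap (toLin' A)) η :=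
    (LinearMap.toContinuousLinearMap (toLin' A)).hasFDerivAt
  refine (((hasDerivAt_inv h).comp_hasFDerivAt η hden).smul hnum).congr_fderiv ?_
  ext v i
  simp [vecMulVec_mulVec, ← inv_pow]
  ring

theorem det_fderiv_fracLinear (A : Matrix ι ι ℝ) (c : ι → ℝ) {η : ι → ℝ}
    (h : 1 + c ⬝ᵥ η ≠ 0) :
    (fderiv ℝ (fracLinear A c) η).det = A.det / (1 + c ⬝ᵥ η) ^ (Fintype.card ι + 1) := by
  set a := (1 + c ⬝ᵥ η)⁻¹ with ha
  have hJ : a • (A - a • vecMulVec (A *ᵥ η) c) = a • (A * (1 + vecMulVec (-a • η) c)) := by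
    rw [Matrix.mul_add, mul_vecMulVec, mulVec_smul, Matrix.mul_one, neg_smul, neg_vecMulVec,
      ← smul_vecMulVec, sub_eq_add_neg]
  have ha_eta : 1 - a * (c ⬝ᵥ η) = a := by
    rw [ha]; field_simp; ring
  rw [(hasFDerivAt_fracLinear A c h).fderiv, ContinuousLinearMap.det,
    LinearMap.coe_toContinuousLinearMap, LinearMap.det_toLin', hJ, det_smul, det_mul,
    det_one_add_vecMulVec, dotProduct_smul, smul_eq_mul, neg_mul, ← sub_eq_add_neg, ha_eta,
    div_eq_mul_inv, ha, ← inv_pow, pow_succ]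
  ring

theorem abs_det_fderiv_fracLinear_mul_rpow {A : Matrix ι ι ℝ} (hA : Aᵀ * A = 1)
    (c : ι → ℝ) {η : ι → ℝ} (h : 1 + c ⬝ᵥ η ≠ 0) :
    |(fderiv ℝ (fracLinear A c) η).det| *
        √(∑ i, fracLinear A c η i ^ 2) ^ (-(1 + (Fintype.card ι : ℝ))) =
      √(∑ i, η i ^ 2) ^ (-(1 + (Fintype.card ι : ℝ))) := by
  have hu : 0 < |1 + c ⬝ᵥ η| := abs_pos.mpr h
  have hu_rpow : |1 + c ⬝ᵥ η| ^ (-(1 + (Fintype.card ι : ℝ))) =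
      (|1 + c ⬝ᵥ η| ^ (Fintype.card ι + 1))⁻¹ := by
    rw [Real.rpow_neg hu.le, ← Real.rpow_natCast, Nat.cast_succ,
      add_comm (1 : ℝ) (Fintype.card ι : ℝ)]
  rw [det_fderiv_fracLinear A c h, sqrt_sum_sq_fracLinear hA, abs_div,
    abs_det_eq_one_of_transpose_mul_self hA, abs_pow, Real.div_rpow (Real.sqrt_nonneg _) hu.le,
    hu_rpow]
  field_simp

theorem map_fracLinear_withDensity {A : Matrix ι ι ℝ} (hA : Aᵀ * A = 1)
    (c : ι → ℝ) :
    Measure.map (fracLinear A c) (volume.withDensity fun η : ι → ℝ =>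
        ENNReal.ofReal (√(∑ i, η i ^ 2) ^ (-(1 + (Fintype.card ι : ℝ))))) =
      volume.withDensity fun η : ι → ℝ =>
        ENNReal.ofReal (√(∑ i, η i ^ 2) ^ (-(1 + (Fintype.card ι : ℝ)))) := by
  have hbij := bijOn_fracLinear hA (mul_eq_one_comm.mp hA) c
  have hopen : IsOpen {η : ι → ℝ | 1 + c ⬝ᵥ η ≠ 0} :=
    isOpen_ne_fun (continuous_const.add (continuous_const.dotProduct continuous_id))
      continuous_const
  refine map_withDensity_eq_self_of_jacobian volume (measurable_fracLinear A c)
    hopen.measurableSet (volume_compl_setOf_one_add_dotProduct_ne_zero c)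
    (hbij.image_eq ▸ volume_compl_setOf_one_add_dotProduct_ne_zero _)
    (fun η h => (hasFDerivAt_fracLinear A c h).differentiableAt.hasFDerivAt.hasFDerivWithinAt)
    hbij.injOn fun η h => ?_
  rw [← ENNReal.ofReal_mul (abs_nonneg _), abs_det_fderiv_fracLinear_mul_rpow hA c h]

end FracLinear

theorem stmt_13_general (d : ℕ) (M : Matrix (Fin d) (Fin d) ℝ)
    (hM : Mᵀ * M = 1) (b : Fin d → ℝ) :
    (∀ η : Fin d → ℝ, 1 + b ⬝ᵥ M.mulVec η ≠ 0 →
        Real.sqrt (∑ i, ((1 + b ⬝ᵥ M.mulVec η)⁻¹ • M.mulVec η) i ^ 2)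
          = Real.sqrt (∑ i, η i ^ 2) / |1 + b ⬝ᵥ M.mulVec η|) ∧
    (∀ η : Fin d → ℝ, 1 + b ⬝ᵥ M.mulVec η ≠ 0 →
        (fderiv ℝ (fun v : Fin d → ℝ => (1 + b ⬝ᵥ M.mulVec v)⁻¹ • M.mulVec v) η).det
          = M.det / (1 + b ⬝ᵥ M.mulVec η) ^ (d + 1)) ∧
    Measure.map (fun η : Fin d → ℝ => (1 + b ⬝ᵥ M.mulVec η)⁻¹ • M.mulVec η)
        (volume.withDensity fun η : Fin d → ℝ =>
          ENNReal.ofReal (Real.sqrt (∑ i, η i ^ 2) ^ (-(1 + (d:ℝ)))))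
      = volume.withDensity fun η : Fin d → ℝ =>
          ENNReal.ofReal (Real.sqrt (∑ i, η i ^ 2) ^ (-(1 + (d:ℝ)))) := by
  simp only [dotProduct_mulVec]
  refine ⟨fun η _ => sqrt_sum_sq_fracLinear hM _ η, fun η h => ?_, ?_⟩
  · have hdet := det_fderiv_fracLinear M (b ᵥ* M) h
    rwa [Fintype.card_fin] at hdet
  · have hmap := map_fracLinear_withDensity hM (b ᵥ* M)
    rwa [Fintype.card_fin] at hmap

/-- Under the rigid motion `x ↦ Mx + b` with `M ∈ SO(d)`, the hyperplane parametrized by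
`η` (via `ηᵀx = 1`) maps under `g⁻¹` to the hyperplane parametrized by
`η' = Mη/(1 + bᵀMη)`.  Claims: (i) `‖η'‖ = ‖η‖/|1 + bᵀMη|` (Euclidean norms);
(ii) the Jacobian determinant of `η ↦ η'` equals `det M/(1 + bᵀMη)^{d+1}`;
(iii) the measure `‖η‖^{-(1+d)} dη` is invariant under this action. -/
theorem stmt_13 (d : ℕ) (M : Matrix (Fin d) (Fin d) ℝ)
    (hM : Mᵀ * M = 1) (hdet : M.det = 1) (b : Fin d → ℝ) :
    (∀ η : Fin d → ℝ, 1 + b ⬝ᵥ M.mulVec η ≠ 0 →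
        Real.sqrt (∑ i, ((1 + b ⬝ᵥ M.mulVec η)⁻¹ • M.mulVec η) i ^ 2)
          = Real.sqrt (∑ i, η i ^ 2) / |1 + b ⬝ᵥ M.mulVec η|) ∧
    (∀ η : Fin d → ℝ, 1 + b ⬝ᵥ M.mulVec η ≠ 0 →
        (fderiv ℝ (fun v : Fin d → ℝ => (1 + b ⬝ᵥ M.mulVec v)⁻¹ • M.mulVec v) η).det
          = M.det / (1 + b ⬝ᵥ M.mulVec η) ^ (d + 1)) ∧
    Measure.map (fun η : Fin d → ℝ => (1 + b ⬝ᵥ M.mulVec η)⁻¹ • M.mulVec η)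
        (volume.withDensity fun η : Fin d → ℝ =>
          ENNReal.ofReal (Real.sqrt (∑ i, η i ^ 2) ^ (-(1 + (d:ℝ)))))
      = volume.withDensity fun η : Fin d → ℝ =>
          ENNReal.ofReal (Real.sqrt (∑ i, η i ^ 2) ^ (-(1 + (d:ℝ)))) :=
  stmt_13_general d M hM b
end

section
/- For a tetrahedron T with canonical vertices and hyperplane σ with parametrization vector (a,b,c) each > 1, the first absolute moment ι⁽¹⁾(σ) = ∫_T |ax₁+bx₂+cx₃ − 1| dλ₃ equals (1/24)(2/(abc) + a + b + c − 4). -/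
/-!
With `u = ax + by + cz - 1` we have `|u| = u + 2 max(-u, 0)`. The integral of the affine `u` over
`𝕋₃` is elementary. Since `a, b, c ≥ 1`, `-u` is positive on `𝕋₃` exactly on the smaller
tetrahedron `{x, y, z ≥ 0, ax + by + cz ≤ 1}`, and by Fubini and
`∫₀^{K/γ} (K - γt)ⁿ dt = K^{n+1} / ((n+1)γ)` the integral of `1 - ax - by - cz` over it is
`1 / (24abc)`.
-/

open MeasureTheory Set

theorem setIntegral_prod_eq_intervalIntegral_slices {E : Type*} [MeasureSpace E]
    [SFinite (volume : Measure E)] {S : Set (ℝ × E)} (hS : MeasurableSet S) {f : ℝ × E → ℝ}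
    (hf : IntegrableOn f S) {L : ℝ} (hL : 0 ≤ L) (hSL : ∀ p ∈ S, p.1 ∈ Icc 0 L) :
    ∫ p in S, f p = ∫ x in 0..L, ∫ y in Prod.mk x ⁻¹' S, f (x, y) := by
  rw [Measure.volume_eq_prod] at hf ⊢
  rw [← integral_indicator hS, integral_prod _ (hf.integrable_indicator hS),
    intervalIntegral.integral_of_le hL, ← integral_Icc_eq_integral_Ioc,
    setIntegral_eq_integral_of_forall_compl_eq_zero]
  · congr 1 with x
    rw [← integral_indicator (measurable_prodMk_left hS)]
    rfl
  · intro x hx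
    have : Prod.mk x ⁻¹' S = ∅ := eq_empty_of_forall_notMem fun y hy => hx (hSL _ hy)
    rw [this, Measure.restrict_empty, integral_zero_measure]

theorem integral_sub_mul_pow {γ : ℝ} (hγ : γ ≠ 0) (K : ℝ) (n : ℕ) :
    ∫ t in 0..K / γ, (K - γ * t) ^ n = K ^ (n + 1) / ((n + 1) * γ) := by
  rw [intervalIntegral.integral_comp_sub_mul (fun t => t ^ n) hγ, mul_div_cancel₀ K hγ, sub_self,
    mul_zero, sub_zero, integral_pow, zero_pow n.succ_ne_zero, sub_zero, smul_eq_mul]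
  field_simp

def cornerTriangle (β γ K : ℝ) : Set (ℝ × ℝ) := {p | 0 ≤ p.1 ∧ 0 ≤ p.2 ∧ β * p.1 + γ * p.2 ≤ K}

-- `{x, y, z ≥ 0, αx + βy + γz ≤ 1}`, written through its slices `x = const` to suit Fubini.
def cornerTetrahedron (α β γ : ℝ) : Set (ℝ × ℝ × ℝ) :=
  {p | 0 ≤ p.1 ∧ p.2 ∈ cornerTriangle β γ (1 - α * p.1)}

section Corner

variable {α β γ K : ℝ}

theorem isCompact_cornerTriangle (hβ : 0 < β) (hγ : 0 < γ) :
    IsCompact (cornerTriangle β γ K) := by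
  refine (isCompact_Icc.prod isCompact_Icc).of_isClosed_subset ?_
    (fun p ⟨h₁, h₂, h₃⟩ => ⟨⟨h₁, ?_⟩, ⟨h₂, ?_⟩⟩ :
      cornerTriangle β γ K ⊆ Icc 0 (K / β) ×ˢ Icc 0 (K / γ))
  · simp only [cornerTriangle, ofPred_and]
    refine .inter (isClosed_le ?_ ?_) (.inter (isClosed_le ?_ ?_) (isClosed_le ?_ ?_)) <;> fun_prop
  · rw [le_div_iff₀ hβ]; nlinarith
  · rw [le_div_iff₀ hγ]; nlinarith

theorem isClosed_cornerTetrahedron : IsClosed (cornerTetrahedron α β γ) := by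
  simp only [cornerTetrahedron, cornerTriangle, ofPred_and]
  refine .inter (isClosed_le ?_ ?_) (.inter (isClosed_le ?_ ?_)
    (.inter (isClosed_le ?_ ?_) (isClosed_le ?_ ?_))) <;> fun_prop

theorem isCompact_cornerTetrahedron (hα : 0 < α) (hβ : 0 < β) (hγ : 0 < γ) :
    IsCompact (cornerTetrahedron α β γ) := by
  refine (isCompact_Icc.prod (isCompact_Icc.prod isCompact_Icc)).of_isClosed_subset
    isClosed_cornerTetrahedron (fun p ⟨h₁, h₂, h₃, h₄⟩ => ⟨⟨h₁, ?_⟩, ⟨h₂, ?_⟩, ⟨h₃, ?_⟩⟩ :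
      cornerTetrahedron α β γ ⊆ Icc 0 (1 / α) ×ˢ Icc 0 (1 / β) ×ˢ Icc 0 (1 / γ))
  all_goals rw [le_div_iff₀ (by assumption)]; nlinarith

theorem integral_cornerTriangle (hβ : 0 < β) (hγ : 0 < γ) (hK : 0 ≤ K) {f : ℝ × ℝ → ℝ}
    (hf : Continuous f) :
    ∫ p in cornerTriangle β γ K, f p = ∫ y in 0..K / β, ∫ z in 0..(K - β * y) / γ, f (y, z) := by
  have hT := isCompact_cornerTriangle (K := K) hβ hγ
  have hTx : ∀ p ∈ cornerTriangle β γ K, p.1 ∈ Icc 0 (K / β) := fun p ⟨h₁, h₂, h₃⟩ =>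
    ⟨h₁, (le_div_iff₀ hβ).2 (by nlinarith)⟩
  rw [setIntegral_prod_eq_intervalIntegral_slices hT.measurableSet
    (hf.continuousOn.integrableOn_compact hT) (by positivity) hTx]
  refine intervalIntegral.integral_congr fun y hy => ?_
  rw [uIcc_of_le (by positivity), mem_Icc, le_div_iff₀ hβ] at hy
  have hslice : Prod.mk y ⁻¹' cornerTriangle β γ K = Icc 0 ((K - β * y) / γ) := by
    ext z
    simp only [cornerTriangle, mem_preimage, mem_ofPred_eq, mem_Icc, le_div_iff₀ hγ]
    constructor
    · rintro ⟨-, hz, hyz⟩; exact ⟨hz, by linarith⟩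
    · rintro ⟨hz, hyz⟩; exact ⟨hy.1, hz, by linarith⟩
  rw [hslice, integral_Icc_eq_integral_Ioc, ← intervalIntegral.integral_of_le]
  exact div_nonneg (by linarith) hγ.le

theorem integral_cornerTetrahedron (hα : 0 < α) (hβ : 0 < β) (hγ : 0 < γ) {f : ℝ × ℝ × ℝ → ℝ}
    (hf : Continuous f) :
    ∫ p in cornerTetrahedron α β γ, f p =
      ∫ x in 0..1 / α, ∫ y in 0..(1 - α * x) / β, ∫ z in 0..(1 - α * x - β * y) / γ,
        f (x, y, z) := by
  have hT := isCompact_cornerTetrahedron hα hβ hγ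
  have hTx : ∀ p ∈ cornerTetrahedron α β γ, p.1 ∈ Icc 0 (1 / α) := fun p ⟨h₁, h₂, h₃, h₄⟩ =>
    ⟨h₁, (le_div_iff₀ hα).2 (by nlinarith)⟩
  rw [setIntegral_prod_eq_intervalIntegral_slices hT.measurableSet
    (hf.continuousOn.integrableOn_compact hT) (by positivity) hTx]
  refine intervalIntegral.integral_congr fun x hx => ?_
  rw [uIcc_of_le (by positivity), mem_Icc, le_div_iff₀ hα] at hx
  have hslice : Prod.mk x ⁻¹' cornerTetrahedron α β γ = cornerTriangle β γ (1 - α * x) :=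
    ext fun q => and_iff_right hx.1
  rw [hslice]
  exact integral_cornerTriangle hβ hγ (by linarith) (by fun_prop)

theorem integral_cornerTetrahedron_one_sub (hα : 0 < α) (hβ : 0 < β) (hγ : 0 < γ) :
    ∫ p in cornerTetrahedron α β γ, (1 - α * p.1 - β * p.2.1 - γ * p.2.2) =
      1 / (24 * α * β * γ) := by
  have hz := fun K => integral_sub_mul_pow hγ.ne' K 1
  simp only [pow_one] at hz
  rw [integral_cornerTetrahedron hα hβ hγ (by fun_prop)]
  simp only [hz, intervalIntegral.integral_div, integral_sub_mul_pow hβ.ne',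
    integral_sub_mul_pow hα.ne']
  field_simp
  norm_num

end Corner

theorem intervalIntegral_const_mul_id (c a b : ℝ) :
    ∫ x in a..b, c * x = c * ((b ^ 2 - a ^ 2) / 2) := by
  rw [intervalIntegral.integral_const_mul, integral_id]

theorem integral_cornerTetrahedron_one_one_one_affine (a b c : ℝ) :
    ∫ p in cornerTetrahedron 1 1 1, (a * p.1 + b * p.2.1 + c * p.2.2 - 1) =
      (a + b + c) / 24 - 1 / 6 := by
  rw [integral_cornerTetrahedron one_pos one_pos one_pos (by fun_prop)]
  simp only [one_mul, div_one]
  have hz : ∀ x y, ∫ z in 0..1 - x - y, (a * x + b * y + c * z - 1) =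
      (a * x + b * y - 1) * (1 - x - y) + c * (1 - x - y) ^ 2 / 2 := by
    intro x y
    simp (disch := (apply Continuous.intervalIntegrable; fun_prop)) only
      [intervalIntegral.integral_add, intervalIntegral.integral_sub,
        intervalIntegral.integral_const, intervalIntegral_const_mul_id, smul_eq_mul]
    ring
  have hy : ∀ x,
      ∫ y in 0..1 - x, ((a * x + b * y - 1) * (1 - x - y) + c * (1 - x - y) ^ 2 / 2) =
        (a * x - 1) * (1 - x) ^ 2 / 2 + (b + c) * (1 - x) ^ 3 / 6 := by
    intro x
    ring_nf
    simp (disch := (apply Continuous.intervalIntegrable; fun_prop)) only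
      [intervalIntegral.integral_add, intervalIntegral.integral_sub,
        intervalIntegral.integral_const_mul, intervalIntegral.integral_mul_const, integral_pow,
        integral_id, intervalIntegral.integral_const, intervalIntegral_const_mul_id, smul_eq_mul]
    ring
  simp only [hz, hy]
  ring_nf
  simp (disch := (apply Continuous.intervalIntegrable; fun_prop)) only
    [intervalIntegral.integral_add, intervalIntegral.integral_sub,
      intervalIntegral.integral_const_mul, intervalIntegral.integral_mul_const, integral_pow,
      integral_id, intervalIntegral.integral_const, intervalIntegral_const_mul_id, smul_eq_mul]
  ring

theorem setIntegral_cornerTetrahedron_max_one_sub {α β γ a b c : ℝ} (ha : α ≤ a) (hb : β ≤ b)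
    (hc : γ ≤ c) :
    ∫ p in cornerTetrahedron α β γ, max (1 - a * p.1 - b * p.2.1 - c * p.2.2) 0 =
      ∫ p in cornerTetrahedron a b c, (1 - a * p.1 - b * p.2.1 - c * p.2.2) := by
  have hsub : cornerTetrahedron a b c ⊆ cornerTetrahedron α β γ := fun p ⟨h₁, h₂, h₃, h₄⟩ =>
    ⟨h₁, h₂, h₃, by nlinarith⟩
  rw [setIntegral_eq_of_subset_of_forall_sdiff_eq_zero
    isClosed_cornerTetrahedron.measurableSet hsub]
  · exact setIntegral_congr_fun isClosed_cornerTetrahedron.measurableSet fun p ⟨_, _, _, h⟩ =>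
      max_eq_left (by linarith)
  · rintro p ⟨⟨h₁, h₂, h₃, -⟩, hp⟩
    exact max_eq_right (not_lt.1 fun h => hp ⟨h₁, h₂, h₃, by linarith⟩)

def measurableEquivProdFinThree : ℝ × ℝ × ℝ ≃ᵐ EuclideanSpace ℝ (Fin 3) :=
  (((MeasurableEquiv.refl ℝ).prodCongr MeasurableEquiv.finTwoArrow.symm).trans
    (MeasurableEquiv.piFinSuccAbove (fun _ : Fin 3 => ℝ) 0).symm).trans
    (MeasurableEquiv.toLp 2 (Fin 3 → ℝ))

theorem measurePreserving_measurableEquivProdFinThree :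
    MeasurePreserving measurableEquivProdFinThree :=
  (PiLp.volume_preserving_toLp (Fin 3)).comp <|
    (volume_preserving_piFinSuccAbove (fun _ : Fin 3 => ℝ) 0).symm.comp <|
      (MeasurePreserving.id volume).prod (volume_preserving_finTwoArrow ℝ).symm

theorem convexHull_zero_single_fin_three :
    convexHull ℝ {0, EuclideanSpace.single 0 1, EuclideanSpace.single 1 1,
        EuclideanSpace.single 2 1} =
      {x : EuclideanSpace ℝ (Fin 3) | 0 ≤ x 0 ∧ 0 ≤ x 1 ∧ 0 ≤ x 2 ∧ x 0 + x 1 + x 2 ≤ 1} := by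
  refine (convexHull_min ?_ ?_).antisymm fun x ⟨h₀, h₁, h₂, h₃⟩ => ?_
  · rintro x (rfl | rfl | rfl | rfl) <;> simp
  · rintro x ⟨hx₀, hx₁, hx₂, hx₃⟩ y ⟨hy₀, hy₁, hy₂, hy₃⟩ s t hs ht hst
    simp only [mem_ofPred_eq, PiLp.add_apply, PiLp.smul_apply, smul_eq_mul]
    refine ⟨?_, ?_, ?_, ?_⟩ <;> nlinarith
  · set S : Set (EuclideanSpace ℝ (Fin 3)) :=
      {0, EuclideanSpace.single 0 1, EuclideanSpace.single 1 1, EuclideanSpace.single 2 1}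
    have hmem := (convex_convexHull ℝ S).sum_mem (t := Finset.univ)
      (w := ![1 - (x 0 + x 1 + x 2), x 0, x 1, x 2])
      (z := ![0, EuclideanSpace.single 0 1, EuclideanSpace.single 1 1, EuclideanSpace.single 2 1])
      (fun i _ => by fin_cases i <;> simp <;> linarith) (by simp [Fin.sum_univ_four]; ring)
      (fun i _ => subset_convexHull ℝ S (by fin_cases i <;> simp [S]))
    convert hmem using 1
    ext i; fin_cases i <;> simp [Fin.sum_univ_four]

theorem preimage_convexHull_zero_single_fin_three :
    measurableEquivProdFinThree ⁻¹' convexHull ℝ {0, EuclideanSpace.single 0 1,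
        EuclideanSpace.single 1 1, EuclideanSpace.single 2 1} = cornerTetrahedron 1 1 1 := by
  rw [convexHull_zero_single_fin_three]
  ext p
  simp only [cornerTetrahedron, cornerTriangle, mem_preimage, mem_ofPred_eq, one_mul]
  change _ ∧ _ ∧ _ ∧ p.1 + p.2.1 + p.2.2 ≤ 1 ↔ _
  constructor
  · rintro ⟨h₁, h₂, h₃, h₄⟩; exact ⟨h₁, h₂, h₃, by linarith⟩
  · rintro ⟨h₁, h₂, h₃, h₄⟩; exact ⟨h₁, h₂, h₃, by linarith⟩

/-- For the canonical tetrahedron `𝕋₃ = conv(0,e₁,e₂,e₃)` and `a,b,c > 1`,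
`∫_{𝕋₃} |ax₁ + bx₂ + cx₃ − 1| dλ₃ = (1/24)(2/(abc) + a + b + c − 4)`. -/
theorem stmt_16 (a b c : ℝ) (ha : 1 < a) (hb : 1 < b) (hc : 1 < c) :
    (∫ x in convexHull ℝ ({0, EuclideanSpace.single 0 1, EuclideanSpace.single 1 1,
        EuclideanSpace.single 2 1} : Set (EuclideanSpace ℝ (Fin 3))),
      |a * x 0 + b * x 1 + c * x 2 - 1|)
      = (1/24) * (2 / (a * b * c) + a + b + c - 4) := by
  have hint {g : ℝ × ℝ × ℝ → ℝ} (hg : Continuous g) : IntegrableOn g (cornerTetrahedron 1 1 1) :=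
    hg.continuousOn.integrableOn_compact (isCompact_cornerTetrahedron one_pos one_pos one_pos)
  have habs : ∀ u : ℝ, |u| = u + 2 * max (-u) 0 := fun u => by
    rcases le_total 0 u with h | h
    · rw [abs_of_nonneg h, max_eq_right (by linarith)]; ring
    · rw [abs_of_nonpos h, max_eq_left (by linarith)]; ring
  calc _ = ∫ p in cornerTetrahedron 1 1 1, |a * p.1 + b * p.2.1 + c * p.2.2 - 1| := by
        rw [← measurePreserving_measurableEquivProdFinThree.setIntegral_preimage_emb
          measurableEquivProdFinThree.measurableEmbedding,
          preimage_convexHull_zero_single_fin_three]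
        -- `measurableEquivProdFinThree (x, y, z)` is `![x, y, z]` definitionally
        rfl
    _ = (∫ p in cornerTetrahedron 1 1 1, (a * p.1 + b * p.2.1 + c * p.2.2 - 1)) +
          2 * ∫ p in cornerTetrahedron 1 1 1, max (1 - a * p.1 - b * p.2.1 - c * p.2.2) 0 := by
        rw [← integral_const_mul, ← integral_add (hint (by fun_prop)) (hint (by fun_prop))]
        congr with p
        rw [habs]
        ring_nf
    _ = ((a + b + c) / 24 - 1 / 6) + 2 * (1 / (24 * a * b * c)) := by
        rw [integral_cornerTetrahedron_one_one_one_affine,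
          setIntegral_cornerTetrahedron_max_one_sub ha.le hb.le hc.le,
          integral_cornerTetrahedron_one_sub (by linarith) (by linarith) (by linarith)]
    _ = _ := by
        field_simp
        ring
end
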